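/- Let a, b ∈ ℝ with a ≠ 1/3, let μ > 0, and suppose L_a(r) ≠ 0 with constant sign for all r ∈ [0, μ], where L_a(r) = 1 − a − (1 − 3a)e^{−2r}. Fix initial data h₀, w₀, z₀ ∈ ℝ. Then there exists M > 0 (depending only on a, b, μ, h₀, w₀, z₀) such that for every T > 0 and every continuously differentiable solution (q, h, w, z) of the (q,h,w,z) system on [0, T] with q(0) = μ, h(0) = h₀, w(0) = w₀, z(0) = z₀ and with q(t) ∈ [0, μ] for all t ∈ [0, T], one has |h(t)| ≤ M, |w(t)| ≤ M, and |z(t)| ≤ M for all t ∈ [0, T]. -/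

import Mathlib

open Real Set intervalIntegral

/-- The `(q,h,w,z)` ODE system with parameters `a`, `b`, holding (in the sense of one-sided
derivatives within `s`) at every point of `s`. -/
def QHWZSystem (a b : ℝ) (s : Set ℝ) (q h w z : ℝ → ℝ) : Prop :=
  ∀ t ∈ s,
    HasDerivWithinAt q (h t * w t * (1 - a - (1 - 3 * a) * Real.exp (-(2 * q t)))) s t ∧
    HasDerivWithinAt h (-(2 - b) * w t * z t * (1 + Real.exp (-q t)) * Real.exp (-q t)) s t ∧
    HasDerivWithinAt w (-(2 - b) * h t * z t * (1 - Real.exp (-q t)) * Real.exp (-q t)) s t ∧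
    HasDerivWithinAt z ((2 - b) * h t * w t * z t * Real.exp (-(2 * q t))) s t

/-- `L_a(r) = 1 - a - (1 - 3a)e^{-2r}`. -/
noncomputable def Lfun (a r : ℝ) : ℝ := 1 - a - (1 - 3 * a) * Real.exp (-(2 * r))

theorem qhwz_bounded (a b μ h₀ w₀ z₀ : ℝ) (ha : a ≠ 1 / 3) (hμ : 0 < μ)
    (hsign : (∀ r ∈ Set.Icc (0 : ℝ) μ, 0 < Lfun a r) ∨ (∀ r ∈ Set.Icc (0 : ℝ) μ, Lfun a r < 0)) :
    ∃ M : ℝ, 0 < M ∧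
      ∀ T : ℝ, 0 < T → ∀ q h w z : ℝ → ℝ,
        QHWZSystem a b (Set.Icc 0 T) q h w z →
        q 0 = μ → h 0 = h₀ → w 0 = w₀ → z 0 = z₀ →
        (∀ t ∈ Set.Icc (0 : ℝ) T, q t ∈ Set.Icc 0 μ) →
        ∀ t ∈ Set.Icc (0 : ℝ) T, |h t| ≤ M ∧ |w t| ≤ M ∧ |z t| ≤ M := by
  classical
  have hμ0 : (0:ℝ) ≤ μ := hμ.le
  set c := 2 - b with hc
  -- projection onto `[0, μ]`
  set pr : ℝ → ℝ := fun s => min (max s 0) μ with hprdef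
  have hprmem : ∀ s, pr s ∈ Icc (0:ℝ) μ := fun s =>
    ⟨le_min (le_max_right _ _) hμ0, min_le_right _ _⟩
  have hprid : ∀ s ∈ Icc (0:ℝ) μ, pr s = s := by
    intro s hs
    simp [hprdef, max_eq_left hs.1, min_eq_left hs.2]
  have hprcont : Continuous pr := (continuous_id.max continuous_const).min continuous_const
  have hLcont : Continuous fun r => Lfun a r := by
    unfold Lfun; fun_prop
  have hLpr : ∀ s, Lfun a (pr s) ≠ 0 := by
    intro s
    rcases hsign with H | H
    · exact (H _ (hprmem s)).ne'
    · exact (H _ (hprmem s)).ne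
  -- integrating factor exponent Φ
  set f1 : ℝ → ℝ := fun s => c * Real.exp (-(2 * pr s)) / Lfun a (pr s) with hf1def
  have hf1cont : Continuous f1 := by
    apply Continuous.div
    · exact continuous_const.mul (Real.continuous_exp.comp (continuous_const.mul hprcont).neg)
    · exact hLcont.comp hprcont
    · exact hLpr
  set Φ : ℝ → ℝ := fun r => ∫ s in (0:ℝ)..r, f1 s with hΦdef
  have hΦderiv : ∀ r, HasDerivAt Φ (f1 r) r := fun r =>
    (hf1cont.integral_hasStrictDerivAt 0 r).hasDerivAt
  have hΦdiff : Differentiable ℝ Φ := fun r => (hΦderiv r).differentiableAt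
  have hΦcont : Continuous Φ := hΦdiff.continuous
  -- the function D solving D' L = 4 c e^{-r} - c e^{-2r} D
  set f2 : ℝ → ℝ := fun s => 4 * c * Real.exp (-(pr s)) * Real.exp (Φ (pr s)) / Lfun a (pr s)
    with hf2def
  have hf2cont : Continuous f2 := by
    apply Continuous.div
    · exact (continuous_const.mul (Real.continuous_exp.comp hprcont.neg)).mul
        (Real.continuous_exp.comp (hΦcont.comp hprcont))
    · exact hLcont.comp hprcont
    · exact hLpr
  set J : ℝ → ℝ := fun r => ∫ s in (0:ℝ)..r, f2 s with hJdef
  have hJderiv : ∀ r, HasDerivAt J (f2 r) r := fun r =>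
    (hf2cont.integral_hasStrictDerivAt 0 r).hasDerivAt
  set D : ℝ → ℝ := fun r => Real.exp (-(Φ r)) * J r with hDdef
  set D' : ℝ → ℝ := fun r => Real.exp (-(Φ r)) * f2 r - f1 r * D r with hD'def
  have hDderiv : ∀ r, HasDerivAt D (D' r) r := by
    intro r
    have h1 : HasDerivAt (fun r => Real.exp (-(Φ r))) (Real.exp (-(Φ r)) * (-(f1 r))) r :=
      ((hΦderiv r).neg).exp
    have h2 := h1.mul (hJderiv r)
    refine h2.congr_deriv (Eq.symm ?_)
    simp only [hD'def, hDdef]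
    ring
  have hDdiff : Differentiable ℝ D := fun r => (hDderiv r).differentiableAt
  have hDcont : Continuous D := hDdiff.continuous
  -- key pointwise identity
  have hkey : ∀ r ∈ Icc (0:ℝ) μ,
      D' r * Lfun a r = 4 * c * Real.exp (-r) - c * Real.exp (-(2 * r)) * D r := by
    intro r hr
    have hprr : pr r = r := hprid r hr
    have hLne : Lfun a r ≠ 0 := by rw [← hprr]; exact hLpr r
    simp only [hD'def, hf2def, hf1def, hprr, Real.exp_neg (Φ r)]
    field_simp
  -- bounds for Φ and D on the compact interval
  obtain ⟨K1, hK1⟩ := (isCompact_Icc : IsCompact (Icc (0:ℝ) μ)).exists_bound_of_continuousOn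
    hΦcont.continuousOn
  obtain ⟨K2, hK2⟩ := (isCompact_Icc : IsCompact (Icc (0:ℝ) μ)).exists_bound_of_continuousOn
    hDcont.continuousOn
  set K1' : ℝ := max K1 0 with hK1'def
  set K2' : ℝ := max K2 0 with hK2'def
  have hK1'' : ∀ r ∈ Icc (0:ℝ) μ, |Φ r| ≤ K1' := fun r hr =>
    le_trans (hK1 r hr) (le_max_left _ _)
  have hK2'' : ∀ r ∈ Icc (0:ℝ) μ, |D r| ≤ K2' := fun r hr =>
    le_trans (hK2 r hr) (le_max_left _ _)
  have hK1'nonneg : 0 ≤ K1' := le_max_right _ _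
  have hK2'nonneg : 0 ≤ K2' := le_max_right _ _
  set Mz : ℝ := |z₀| * Real.exp (2 * K1') with hMzdef
  have hMznonneg : 0 ≤ Mz := mul_nonneg (abs_nonneg _) (Real.exp_pos _).le
  set S : ℝ := h₀ ^ 2 + w₀ ^ 2 + K2' * |z₀| + K2' * Mz with hSdef
  have hSnonneg : 0 ≤ S := by positivity
  refine ⟨Mz + Real.sqrt S + 1, by positivity, ?_⟩
  intro T hT q h w z hsys hq0 hh0 hw0 hz0 hqmem
  have hμIcc : μ ∈ Icc (0:ℝ) μ := ⟨hμ0, le_refl μ⟩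
  have h0T : (0:ℝ) ∈ Icc (0:ℝ) T := ⟨le_refl 0, hT.le⟩
  -- rephrase the system using Lfun
  have hq' : ∀ t ∈ Icc (0:ℝ) T,
      HasDerivWithinAt q (h t * w t * Lfun a (q t)) (Icc 0 T) t := fun t ht => (hsys t ht).1
  have hh' : ∀ t ∈ Icc (0:ℝ) T,
      HasDerivWithinAt h (-c * w t * z t * (1 + Real.exp (-q t)) * Real.exp (-q t)) (Icc 0 T) t :=
    fun t ht => (hsys t ht).2.1
  have hw' : ∀ t ∈ Icc (0:ℝ) T,
      HasDerivWithinAt w (-c * h t * z t * (1 - Real.exp (-q t)) * Real.exp (-q t)) (Icc 0 T) t :=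
    fun t ht => (hsys t ht).2.2.1
  have hz' : ∀ t ∈ Icc (0:ℝ) T,
      HasDerivWithinAt z (c * h t * w t * z t * Real.exp (-(2 * q t))) (Icc 0 T) t :=
    fun t ht => (hsys t ht).2.2.2
  have hqcont : ContinuousOn q (Icc 0 T) := fun t ht => (hq' t ht).continuousWithinAt
  have hhcont : ContinuousOn h (Icc 0 T) := fun t ht => (hh' t ht).continuousWithinAt
  have hwcont : ContinuousOn w (Icc 0 T) := fun t ht => (hw' t ht).continuousWithinAt
  have hzcont : ContinuousOn z (Icc 0 T) := fun t ht => (hz' t ht).continuousWithinAt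
  have hprq : ∀ t ∈ Icc (0:ℝ) T, pr (q t) = q t := fun t ht => hprid (q t) (hqmem t ht)
  have hLqne : ∀ t ∈ Icc (0:ℝ) T, Lfun a (q t) ≠ 0 := by
    intro t ht; rw [← hprq t ht]; exact hLpr (q t)
  -- first conserved quantity: F = z * exp (-(Φ ∘ q))
  set F : ℝ → ℝ := fun t => z t * Real.exp (-(Φ (q t))) with hFdef
  have hF' : ∀ t ∈ Icc (0:ℝ) T, HasDerivWithinAt F 0 (Icc 0 T) t := by
    intro t ht
    have hΦq : HasDerivWithinAt (fun t => Φ (q t))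
        (f1 (q t) * (h t * w t * Lfun a (q t))) (Icc 0 T) t :=
      (hΦderiv (q t)).comp_hasDerivWithinAt t (hq' t ht)
    have hE : HasDerivWithinAt (fun t => Real.exp (-(Φ (q t))))
        (Real.exp (-(Φ (q t))) * (-(f1 (q t) * (h t * w t * Lfun a (q t))))) (Icc 0 T) t :=
      hΦq.neg.exp
    have hmul := (hz' t ht).mul hE
    refine hmul.congr_deriv (Eq.symm ?_)
    have hf1q : f1 (q t) * Lfun a (q t) = c * Real.exp (-(2 * q t)) := by
      simp only [hf1def, hprq t ht]
      exact div_mul_cancel₀ _ (hLqne t ht)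
    linear_combination (Real.exp (-(Φ (q t))) * z t * h t * w t) * hf1q
  have hFcont : ContinuousOn F (Icc 0 T) :=
    hzcont.mul (Real.continuous_exp.comp_continuousOn ((hΦcont.comp_continuousOn hqcont).neg))
  have hFconst : ∀ t ∈ Icc (0:ℝ) T, F t = F 0 := by
    intro t ht
    refine constant_of_has_deriv_right_zero hFcont ?_ t ht
    intro x hx
    exact (hF' x (Ico_subset_Icc_self hx)).mono_of_mem_nhdsWithin (Icc_mem_nhdsGE_of_mem hx)
  -- bound for z
  have hzval : ∀ t ∈ Icc (0:ℝ) T, z t = z₀ * Real.exp (Φ (q t) - Φ μ) := by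
    intro t ht
    have hFt := hFconst t ht
    simp only [hFdef, hq0, hz0] at hFt
    calc z t = z t * Real.exp (-(Φ (q t))) * Real.exp (Φ (q t)) := by
              rw [mul_assoc, ← Real.exp_add]; simp
      _ = z₀ * Real.exp (-(Φ μ)) * Real.exp (Φ (q t)) := by rw [hFt]
      _ = z₀ * Real.exp (Φ (q t) - Φ μ) := by
              rw [mul_assoc, ← Real.exp_add,
                show -(Φ μ) + Φ (q t) = Φ (q t) - Φ μ by ring]
  have hzbound : ∀ t ∈ Icc (0:ℝ) T, |z t| ≤ Mz := by
    intro t ht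
    rw [hzval t ht, abs_mul, abs_of_pos (Real.exp_pos _)]
    have h1 : Φ (q t) - Φ μ ≤ 2 * K1' := by
      have := hK1'' (q t) (hqmem t ht)
      have := hK1'' μ hμIcc
      have h1 := abs_le.1 (hK1'' (q t) (hqmem t ht))
      have h2 := abs_le.1 (hK1'' μ hμIcc)
      linarith [h1.2, h2.1]
    exact mul_le_mul_of_nonneg_left (Real.exp_le_exp.2 h1) (abs_nonneg _)
  -- second conserved quantity: E = h^2 + w^2 + D(q) * z
  set E : ℝ → ℝ := fun t => h t ^ 2 + w t ^ 2 + D (q t) * z t with hEdef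
  have hE' : ∀ t ∈ Icc (0:ℝ) T, HasDerivWithinAt E 0 (Icc 0 T) t := by
    intro t ht
    have hDq : HasDerivWithinAt (fun t => D (q t))
        (D' (q t) * (h t * w t * Lfun a (q t))) (Icc 0 T) t :=
      (hDderiv (q t)).comp_hasDerivWithinAt t (hq' t ht)
    have hsum := (((hh' t ht).pow 2).add ((hw' t ht).pow 2)).add (hDq.mul (hz' t ht))
    refine hsum.congr_deriv (Eq.symm ?_)
    have hk := hkey (q t) (hqmem t ht)
    linear_combination (-(h t * w t * z t)) * hk
  have hEcont : ContinuousOn E (Icc 0 T) :=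
    ((hhcont.pow 2).add (hwcont.pow 2)).add ((hDcont.comp_continuousOn hqcont).mul hzcont)
  have hEconst : ∀ t ∈ Icc (0:ℝ) T, E t = E 0 := by
    intro t ht
    refine constant_of_has_deriv_right_zero hEcont ?_ t ht
    intro x hx
    exact (hE' x (Ico_subset_Icc_self hx)).mono_of_mem_nhdsWithin (Icc_mem_nhdsGE_of_mem hx)
  -- bounds for h and w
  have hsq : ∀ t ∈ Icc (0:ℝ) T, h t ^ 2 + w t ^ 2 ≤ S := by
    intro t ht
    have hEt := hEconst t ht
    simp only [hEdef, hq0, hh0, hw0, hz0] at hEt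
    have h1 : |D μ * z₀| ≤ K2' * |z₀| := by
      rw [abs_mul]
      exact mul_le_mul_of_nonneg_right (hK2'' μ hμIcc) (abs_nonneg _)
    have h2 : |D (q t) * z t| ≤ K2' * Mz := by
      rw [abs_mul]
      exact mul_le_mul (hK2'' (q t) (hqmem t ht)) (hzbound t ht) (abs_nonneg _) hK2'nonneg
    have h1' := abs_le.1 h1
    have h2' := abs_le.1 h2
    simp only [hSdef]
    nlinarith [h1'.1, h1'.2, h2'.1, h2'.2, hEt]
  intro t ht
  have hht : h t ^ 2 ≤ S := le_trans (by nlinarith [sq_nonneg (w t)]) (hsq t ht)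
  have hwt : w t ^ 2 ≤ S := le_trans (by nlinarith [sq_nonneg (h t)]) (hsq t ht)
  have habs : ∀ x : ℝ, x ^ 2 ≤ S → |x| ≤ Real.sqrt S := by
    intro x hx
    rw [← Real.sqrt_sq_eq_abs]
    exact Real.sqrt_le_sqrt hx
  refine ⟨?_, ?_, ?_⟩
  · have := habs _ hht
    have : |h t| ≤ Real.sqrt S := this
    linarith [hMznonneg, this]
  · have := habs _ hwt
    linarith [hMznonneg, this]
  · have := hzbound t ht
    linarith [Real.sqrt_nonneg S, this]
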